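/- In the HNN extension K of D_n = ⟨A, B⟩ by T with T B T⁻¹ = A B, where n ≥ 2 is even, the subgroup Γ generated by the conjugates Aᵏ T A⁻ᵏ (k = 0, …, n−1) has index 2n in K, is a free group of rank n, but is not a normal subgroup of K. -/

import Mathlib

/-!
By Britton's lemma, a word in the conjugates `g t g⁻¹` (`g` ranging over elements whose pairwise
quotients avoid both associated subgroups) is a reduced HNN word, so it lies in the base group only
if it is trivial. The rotations `Aᵏ` are such elements of `Dₙ`, so `Γ` is free on the `Aᵏ T A⁻ᵏ`
and meets `Dₙ` trivially. Since `T · d ∈ Dₙ · Γ` and `T⁻¹ · d ∈ Dₙ · Γ` for every `d ∈ Dₙ`, the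
set `Dₙ · Γ` is all of `K`, so `Dₙ` is a complement of `Γ` and `[K : Γ] = |Dₙ| = 2n`. Finally
`B T B⁻¹ = A⁻¹ T`, so normality of `Γ` would put `A⁻¹` in `Γ ∩ Dₙ = 1`.
-/

open HNNExtension
open scoped Pointwise

open Subgroup in
theorem Subgroup.coe_mul_eq_univ_of_closure_union_eq_top {G : Type*} [Group G]
    {H K : Subgroup G} {S : Set G} (hS : closure ((H : Set G) ∪ S) = ⊤)
    (hmul : ∀ s ∈ S, ∀ h ∈ H, s * h ∈ (H : Set G) * (K : Set G) ∧
      s⁻¹ * h ∈ (H : Set G) * (K : Set G)) :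
    (H : Set G) * (K : Set G) = Set.univ := by
  have hH {x} (hx : x ∈ H) : x ∈ (H : Set G) * (K : Set G) := ⟨x, hx, 1, K.one_mem, mul_one x⟩
  suffices key : ∀ x ∈ closure ((H : Set G) ∪ S), ∀ h ∈ H, x * h ∈ (H : Set G) * (K : Set G) from
    Set.eq_univ_of_forall fun x => by
      simpa using key x (hS ▸ mem_top x) 1 H.one_mem
  intro x hx
  induction hx using closure_induction'' with
  | mem s hs =>
    rcases hs with hs | hs
    · exact fun h hh => hH (H.mul_mem hs hh)
    · exact fun h hh => (hmul s hs h hh).1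
  | inv_mem s hs =>
    rcases hs with hs | hs
    · exact fun h hh => hH (H.mul_mem (H.inv_mem hs) hh)
    · exact fun h hh => (hmul s hs h hh).2
  | one => exact fun h hh => hH (by simpa using hh)
  | mul x y _ _ hx hy =>
    intro h hh
    obtain ⟨h₁, hh₁, k₁, hk₁, hyh⟩ := hy h hh
    obtain ⟨h₂, hh₂, k₂, hk₂, hxh⟩ := hx h₁ hh₁
    exact ⟨h₂, hh₂, k₂ * k₁, K.mul_mem hk₂ hk₁, by
      simp only at hxh hyh ⊢
      rw [← mul_assoc, hxh, mul_assoc, hyh, mul_assoc]⟩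

namespace HNNExtension

variable {G : Type*} [Group G] {A B : Subgroup G} {φ : A ≃* B}

theorem closure_range_of_union_t :
    Subgroup.closure
      (((of : G →* HNNExtension G A B φ).range : Set (HNNExtension G A B φ)) ∪ {t}) = ⊤ := by
  refine (Subgroup.eq_top_iff' _).2 fun x => ?_
  induction x using induction_on with
  | of g => exact Subgroup.subset_closure (Or.inl ⟨g, rfl⟩)
  | t => exact Subgroup.subset_closure (Or.inr rfl)
  | mul x y hx hy => exact mul_mem hx hy
  | inv x hx => exact inv_mem hx

variable {ι : Type*} (g : ι → G)

/-- `∏ⱼ (g iⱼ) t^±1 (g iⱼ)⁻¹` as the reduced word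
`(g i₁) · t^±1 ((g i₁)⁻¹ g i₂) · t^±1 ((g i₂)⁻¹ g i₃) ⋯ t^±1 (g iₘ)⁻¹`; this is its head. -/
def conjWordHead : List (ι × Bool) → G
  | [] => 1
  | (i, _) :: _ => g i

def conjWordTail : List (ι × Bool) → List (ℤˣ × G)
  | [] => []
  | (i, b) :: L => (if b then 1 else -1, (g i)⁻¹ * conjWordHead g L) :: conjWordTail L

theorem of_conjWordHead_mul_prod (L : List (ι × Bool)) :
    (of (conjWordHead g L) : HNNExtension G A B φ) *
        ((conjWordTail g L).map fun x => t ^ (x.1 : ℤ) * of x.2).prod =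
      (L.map fun x => cond x.2 (of (g x.1) * t * (of (g x.1))⁻¹)
        (of (g x.1) * t * (of (g x.1))⁻¹)⁻¹).prod := by
  induction L with
  | nil => simp [conjWordHead, conjWordTail]
  | cons x L ih =>
    obtain ⟨i, b⟩ := x
    rw [List.map_cons, List.prod_cons, ← ih]
    cases b <;> simp [conjWordHead, conjWordTail, mul_assoc]

variable {g} in
theorem isChain_conjWordTail (hg : ∀ i j (u : ℤˣ), (g i)⁻¹ * g j ∈ toSubgroup A B u → i = j) :
    ∀ {L : List (ι × Bool)}, FreeGroup.IsReduced L →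
      (conjWordTail g L).IsChain fun a b => a.2 ∈ toSubgroup A B a.1 → a.1 = b.1
  | [], _ => List.isChain_nil
  | [_], _ => List.isChain_singleton _
  | (i, b) :: (j, c) :: L, hL => by
    rw [FreeGroup.isReduced_cons_cons] at hL
    refine List.isChain_cons_cons.2 ⟨fun hmem => ?_, isChain_conjWordTail hg hL.2⟩
    obtain rfl := hg i j _ hmem
    obtain rfl : b = c := hL.1 rfl
    rfl

theorem eq_one_of_lift_conj_t_mem_range_of
    (hg : ∀ i j (u : ℤˣ), (g i)⁻¹ * g j ∈ toSubgroup A B u → i = j) (w : FreeGroup ι)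
    (hw : FreeGroup.lift (fun i => of (g i) * t * (of (g i))⁻¹) w ∈
      (of : G →* HNNExtension G A B φ).range) :
    w = 1 := by
  classical
  let W : NormalWord.ReducedWord G A B :=
    ⟨conjWordHead g w.toWord, conjWordTail g w.toWord,
      isChain_conjWordTail hg FreeGroup.isReduced_toWord⟩
  have hW : W.prod φ = FreeGroup.lift (fun i => of (g i) * t * (of (g i))⁻¹) w := by
    rw [NormalWord.ReducedWord.prod, of_conjWordHead_mul_prod,
      ← FreeGroup.lift_mk (f := fun i => of (g i) * t * (of (g i))⁻¹), FreeGroup.mk_toWord]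
  have hnil : conjWordTail g w.toWord = [] :=
    ReducedWord.toList_eq_nil_of_mem_of_range φ W (hW ▸ hw)
  rw [← FreeGroup.toWord_eq_nil_iff]
  cases h : w.toWord with
  | nil => rfl
  | cons x L => simp [h, conjWordTail] at hnil

theorem injective_lift_conj_t (hg : ∀ i j (u : ℤˣ), (g i)⁻¹ * g j ∈ toSubgroup A B u → i = j) :
    Function.Injective
      (FreeGroup.lift fun i => (of (g i) * t * (of (g i))⁻¹ : HNNExtension G A B φ)) :=
  (injective_iff_map_eq_one _).2 fun w hw =>
    eq_one_of_lift_conj_t_mem_range_of g hg w (hw ▸ one_mem _)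

theorem disjoint_range_of_closure_conj_t
    (hg : ∀ i j (u : ℤˣ), (g i)⁻¹ * g j ∈ toSubgroup A B u → i = j) :
    Disjoint (of : G →* HNNExtension G A B φ).range
      (Subgroup.closure (Set.range fun i => of (g i) * t * (of (g i))⁻¹)) := by
  rw [← FreeGroup.range_lift_eq_closure, Subgroup.disjoint_def]
  rintro _ hx ⟨w, rfl⟩
  rw [eq_one_of_lift_conj_t_mem_range_of g hg w hx, map_one]

end HNNExtension

namespace DihedralGroup

variable {n : ℕ}

theorem mem_zpowers_sr_iff {i : ZMod n} {x : DihedralGroup n} :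
    x ∈ Subgroup.zpowers (sr i) ↔ x = 1 ∨ x = sr i := by
  classical
  have hfin : IsOfFinOrder (sr i) := orderOf_pos_iff.1 (by rw [orderOf_sr]; norm_num)
  rw [hfin.mem_zpowers_iff_mem_range_orderOf, orderOf_sr]
  simp [Finset.range_add_one, or_comm]

theorem eq_zero_of_r_mem_zpowers_sr {i j : ZMod n} (h : r j ∈ Subgroup.zpowers (sr i)) :
    j = 0 := by
  rcases mem_zpowers_sr_iff.1 h with h | h
  · exact r.inj h
  · cases h

end DihedralGroup

namespace DihedralHNN

open DihedralGroup

variable {n : ℕ}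

variable (φ : (Subgroup.closure {sr 0} : Subgroup (DihedralGroup n)) ≃*
  (Subgroup.closure {r 1 * sr 0} : Subgroup (DihedralGroup n)))

def schottkyGen (j : ZMod n) : HNNExtension (DihedralGroup n) _ _ φ :=
  of (r j) * t * (of (r j))⁻¹

def schottkySubgroup : Subgroup (HNNExtension (DihedralGroup n) _ _ φ) :=
  Subgroup.closure (Set.range (schottkyGen φ))

theorem schottkyGen_zero : schottkyGen φ 0 = t := by
  rw [schottkyGen, ← one_def, map_one, one_mul, inv_one, mul_one]

theorem closure_conj_pow_eq_schottkySubgroup [NeZero n] :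
    Subgroup.closure {x | ∃ k : ℕ, k < n ∧
      x = (of (r 1) : HNNExtension (DihedralGroup n) _ _ φ) ^ k * t * ((of (r 1)) ^ k)⁻¹} =
      schottkySubgroup φ := by
  refine congrArg Subgroup.closure (Set.ext fun x => ⟨?_, ?_⟩)
  · rintro ⟨k, -, rfl⟩
    exact ⟨k, by rw [schottkyGen, ← map_pow, r_one_pow]⟩
  · rintro ⟨j, rfl⟩
    exact ⟨j.val, ZMod.val_lt j, by rw [schottkyGen, ← map_pow, r_one_pow, ZMod.natCast_zmod_val]⟩

theorem eq_of_r_inv_mul_r_mem_toSubgroup {i j : ZMod n} {u : ℤˣ}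
    (h : (r i)⁻¹ * r j ∈ toSubgroup (Subgroup.closure {sr 0}) (Subgroup.closure {r 1 * sr 0}) u) :
    i = j := by
  rw [inv_r, r_mul_r] at h
  rw [← neg_add_eq_zero]
  rcases Int.units_eq_one_or u with rfl | rfl
  · rw [toSubgroup_one, ← Subgroup.zpowers_eq_closure] at h
    exact eq_zero_of_r_mem_zpowers_sr h
  · rw [toSubgroup_neg_one, r_mul_sr, ← Subgroup.zpowers_eq_closure] at h
    exact eq_zero_of_r_mem_zpowers_sr h

theorem nonempty_mulEquiv_freeGroup_schottkySubgroup :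
    Nonempty (schottkySubgroup φ ≃* FreeGroup (ZMod n)) :=
  ⟨(MulEquiv.subgroupCongr (FreeGroup.range_lift_eq_closure (f := schottkyGen φ)).symm).trans
    (MonoidHom.ofInjective
      (injective_lift_conj_t r fun _ _ _ => eq_of_r_inv_mul_r_mem_toSubgroup)).symm⟩

theorem disjoint_range_of_schottkySubgroup : Disjoint of.range (schottkySubgroup φ) :=
  disjoint_range_of_closure_conj_t r fun _ _ _ => eq_of_r_inv_mul_r_mem_toSubgroup

theorem t_mul_of_r (i : ZMod n) :
    (t : HNNExtension (DihedralGroup n) _ _ φ) * of (r i) = of (r i) * schottkyGen φ (-i) := by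
  simp only [schottkyGen, ← map_inv, inv_r, neg_neg, ← mul_assoc, ← map_mul, r_mul_r,
    add_neg_cancel, ← one_def, map_one, one_mul]

theorem t_inv_mul_of_r (i : ZMod n) :
    (t : HNNExtension (DihedralGroup n) _ _ φ)⁻¹ * of (r i) =
      of (r i) * (schottkyGen φ (-i))⁻¹ := by
  simp only [schottkyGen, mul_inv_rev, ← map_inv, inv_r, neg_neg, ← mul_assoc,
    ← map_mul, r_mul_r, add_neg_cancel, ← one_def, map_one, one_mul]

variable {φ}
variable (hφ : (φ ⟨sr 0, Subgroup.subset_closure (Set.mem_singleton _)⟩ : DihedralGroup n) =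
  r 1 * sr 0)
include hφ

theorem t_mul_of_sr_zero :
    (t : HNNExtension (DihedralGroup n) _ _ φ) * of (sr 0) = of (sr (-1)) * t := by
  have h := t_mul_of (φ := φ) ⟨sr 0, Subgroup.subset_closure (Set.mem_singleton _)⟩
  have hB : (r 1 * sr 0 : DihedralGroup n) = sr (-1) := by rw [r_mul_sr, zero_sub]
  rw [hφ] at h
  rw [← hB]
  exact h

theorem t_mul_of_sr (i : ZMod n) :
    (t : HNNExtension (DihedralGroup n) _ _ φ) * of (sr i) =
      of (sr (i - 1)) * schottkyGen φ (-i) := by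
  calc t * of (sr i) = t * of (sr 0) * of (r i) := by
        rw [mul_assoc, ← map_mul, sr_mul_r, zero_add]
    _ = of (sr (-1)) * (t * of (r i)) := by rw [t_mul_of_sr_zero hφ, mul_assoc]
    _ = of (sr (i - 1)) * schottkyGen φ (-i) := by
      rw [t_mul_of_r, ← mul_assoc, ← map_mul, sr_mul_r, neg_add_eq_sub]

theorem t_inv_mul_of_sr (i : ZMod n) :
    (t : HNNExtension (DihedralGroup n) _ _ φ)⁻¹ * of (sr i) =
      of (sr (i + 1)) * (schottkyGen φ (-(i + 1)))⁻¹ := by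
  have h : (t : HNNExtension (DihedralGroup n) _ _ φ)⁻¹ * of (sr (-1)) = of (sr 0) * t⁻¹ := by
    rw [inv_mul_eq_iff_eq_mul, ← mul_assoc, t_mul_of_sr_zero hφ, mul_inv_cancel_right]
  calc t⁻¹ * of (sr i) = t⁻¹ * of (sr (-1)) * of (r (i + 1)) := by
        rw [mul_assoc, ← map_mul, sr_mul_r, add_comm i, neg_add_cancel_left]
    _ = of (sr 0) * (t⁻¹ * of (r (i + 1))) := by rw [h, mul_assoc]
    _ = of (sr (i + 1)) * (schottkyGen φ (-(i + 1)))⁻¹ := by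
      rw [t_inv_mul_of_r, ← mul_assoc, ← map_mul, sr_mul_r, zero_add]

theorem coe_range_of_mul_schottkySubgroup :
    ((of : DihedralGroup n →* HNNExtension (DihedralGroup n) _ _ φ).range : Set _) *
      (schottkySubgroup φ : Set (HNNExtension (DihedralGroup n) _ _ φ)) = Set.univ := by
  have hgen (j : ZMod n) : schottkyGen φ j ∈ schottkySubgroup φ :=
    Subgroup.subset_closure ⟨j, rfl⟩
  refine Subgroup.coe_mul_eq_univ_of_closure_union_eq_top closure_range_of_union_t ?_
  rintro _ rfl _ ⟨(i | i), rfl⟩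
  · exact ⟨t_mul_of_r φ i ▸ Set.mul_mem_mul ⟨_, rfl⟩ (hgen _),
      t_inv_mul_of_r φ i ▸ Set.mul_mem_mul ⟨_, rfl⟩ (inv_mem (hgen _))⟩
  · exact ⟨t_mul_of_sr hφ i ▸ Set.mul_mem_mul ⟨_, rfl⟩ (hgen _),
      t_inv_mul_of_sr hφ i ▸ Set.mul_mem_mul ⟨_, rfl⟩ (inv_mem (hgen _))⟩

theorem index_schottkySubgroup : (schottkySubgroup φ).index = 2 * n := by
  rw [(Subgroup.isComplement'_of_disjoint_and_mul_eq_univ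
      (disjoint_range_of_schottkySubgroup φ) (coe_range_of_mul_schottkySubgroup hφ)).index_eq_card,
    ← nat_card, Nat.card_congr (MonoidHom.ofInjective (of_injective φ)).toEquiv.symm]

theorem schottkySubgroup_not_normal (hn : n ≠ 1) : ¬ (schottkySubgroup φ).Normal := by
  intro hN
  have ht : t ∈ schottkySubgroup φ := schottkyGen_zero φ ▸ Subgroup.subset_closure ⟨0, rfl⟩
  have hconj : of (sr 0) * t * (of (sr 0))⁻¹ = of (r (-1)) * (t : HNNExtension _ _ _ φ) := by
    rw [← map_inv, inv_sr, mul_assoc, t_mul_of_sr_zero hφ, ← mul_assoc, ← map_mul, sr_mul_sr,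
      sub_zero]
  have hr : of (r (-1)) ∈ schottkySubgroup φ := by
    have h := mul_mem (hN.conj_mem t ht (of (sr 0))) (inv_mem ht)
    rwa [hconj, mul_inv_cancel_right] at h
  have h1 : r (-1 : ZMod n) = 1 := of_injective φ <|
    ((disjoint_range_of_schottkySubgroup φ).le_bot ⟨⟨_, rfl⟩, hr⟩).trans (map_one _).symm
  exact hn (ZMod.one_eq_zero_iff.1 (neg_eq_zero.1 (r.inj h1)))

end DihedralHNN

theorem hnn_dihedral_even_schottky_subgroup_general (n : ℕ) (hn : 2 ≤ n)
    (φ : (Subgroup.closure {DihedralGroup.sr 0} : Subgroup (DihedralGroup n)) ≃*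
      (Subgroup.closure {DihedralGroup.r 1 * DihedralGroup.sr 0} : Subgroup (DihedralGroup n)))
    (hφ : (φ ⟨DihedralGroup.sr 0, Subgroup.subset_closure (Set.mem_singleton _)⟩ :
        DihedralGroup n) = DihedralGroup.r 1 * DihedralGroup.sr 0)
    (Γ : Subgroup (HNNExtension (DihedralGroup n) _ _ φ))
    (hΓ : Γ = Subgroup.closure
      { x | ∃ k : ℕ, k < n ∧
          x = (HNNExtension.of (DihedralGroup.r 1)) ^ k * HNNExtension.t *
              ((HNNExtension.of (DihedralGroup.r 1)) ^ k)⁻¹ }) :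
    Γ.index = 2 * n ∧ Nonempty (Γ ≃* FreeGroup (Fin n)) ∧ ¬ Γ.Normal := by
  have : NeZero n := ⟨by omega⟩
  rw [hΓ, DihedralHNN.closure_conj_pow_eq_schottkySubgroup]
  obtain ⟨e⟩ := DihedralHNN.nonempty_mulEquiv_freeGroup_schottkySubgroup φ
  exact ⟨DihedralHNN.index_schottkySubgroup hφ,
    ⟨e.trans (FreeGroup.freeGroupCongr (ZMod.finEquiv n).symm.toEquiv)⟩,
    DihedralHNN.schottkySubgroup_not_normal hφ (by omega)⟩

/-- In the HNN extension `K` of `Dₙ = ⟨A,B⟩` (`A = r 1`, `B = sr 0`,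
`n ≥ 2` even) by the stable letter `T = t` with `T B T⁻¹ = AB`, the subgroup `Γ`
generated by the conjugates `Aᵏ T A⁻ᵏ` (`k = 0,…,n−1`) has index `2n`, is free of
rank `n`, but is not normal in `K`. -/
theorem hnn_dihedral_even_schottky_subgroup (n : ℕ) (hn : 2 ≤ n) (heven : Even n)
    (φ : (Subgroup.closure {DihedralGroup.sr 0} : Subgroup (DihedralGroup n)) ≃*
      (Subgroup.closure {DihedralGroup.r 1 * DihedralGroup.sr 0} : Subgroup (DihedralGroup n)))
    (hφ : (φ ⟨DihedralGroup.sr 0, Subgroup.subset_closure (Set.mem_singleton _)⟩ :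
        DihedralGroup n) = DihedralGroup.r 1 * DihedralGroup.sr 0)
    (Γ : Subgroup (HNNExtension (DihedralGroup n) _ _ φ))
    (hΓ : Γ = Subgroup.closure
      { x | ∃ k : ℕ, k < n ∧
          x = (HNNExtension.of (DihedralGroup.r 1)) ^ k * HNNExtension.t *
              ((HNNExtension.of (DihedralGroup.r 1)) ^ k)⁻¹ }) :
    Γ.index = 2 * n ∧ Nonempty (Γ ≃* FreeGroup (Fin n)) ∧ ¬ Γ.Normal :=
  hnn_dihedral_even_schottky_subgroup_general n hn φ hφ Γ hΓ
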